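/- In the lower-bound construction of an acyclic agreement forest from OLA vectors, the sets L_0, L_1, ..., L_k (one per mismatched index plus L_0) partition the full leaf set, and for each i, the nodes of the restricted tree T|_{L_i} (excluding the planted root ρ) are bijectively indexed by span(L_i), identically across all trees T in the collection. -/

import Mathlib

/-!
Fix a component `L_i` with smallest position `m_i`. Every other position `j ∈ L_i` is a consensus
position, and its OLA entry points in every tree to a leaf `x ∈ L_i` or to the node `-x` with
`x ∈ L_i`, never to the node `-m_i`. Adding the positions of `L_i` in increasing order, the leaf `m`
is attached in `T|_{L_i}` next to the trace of its sibling in `T^m`; if that sibling is the node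
`-x`, the entry at `x` is a smaller leaf of `L_i` inside it, and a cluster containing `x` and a
smaller leaf contains the whole node. Hence all trees induce the same clusters on `L_i`.

In a tree with distinct leaves a leaf is indexed by its label and an internal node by minus its
second smallest leaf; every leaf but the smallest is the second smallest leaf of exactly one node.
This is the bijection with `span(L_i)`, and in trees with the same clusters it sends equal indices
to equal clusters.
-/

open scoped Classical

namespace OLA

/-- Rooted binary phylogenetic trees with `ℕ`-labeled leaves. -/
inductive BTree where
  | leaf (x : ℕ)
  | node (l r : BTree)
deriving DecidableEq

namespace BTree

def leafList : BTree → List ℕ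
  | .leaf x => [x]
  | .node l r => leafList l ++ leafList r

def leafSet (t : BTree) : Finset ℕ := t.leafList.toFinset

/-- `t` is a phylogenetic tree on the leaf set `{0, …, n-1}`. -/
def IsPhylo (t : BTree) (n : ℕ) : Prop :=
  t.leafList.Nodup ∧ t.leafSet = Finset.range n

def minLeaf : BTree → ℕ
  | .leaf x => x
  | .node l r => min (minLeaf l) (minLeaf r)

/-- OLA index of the root of a (sub)tree: leaf label, or minus the second
smallest of the minimal leaves of the two children. -/
def idx : BTree → ℤ
  | .leaf x => (x : ℤ)
  | .node l r => -(max (minLeaf l) (minLeaf r) : ℤ)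

/-- Restriction `T^i` of `t` to the leaves labeled `≤ i` (suppressing
degree-2 nodes); `none` if no such leaf exists. -/
def restrictLe : BTree → ℕ → Option BTree
  | .leaf x, i => if x ≤ i then some (.leaf x) else none
  | .node l r, i =>
    match restrictLe l i, restrictLe r i with
    | some l', some r' => some (.node l' r')
    | some l', none => some l'
    | none, some r' => some r'
    | none, none => none

/-- Restriction `T|_S` of `t` to the leaves in `S` (suppressing degree-2 nodes). -/
def restrictTo : BTree → Finset ℕ → Option BTree
  | .leaf x, S => if x ∈ S then some (.leaf x) else none
  | .node l r, S =>
    match restrictTo l S, restrictTo r S with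
    | some l', some r' => some (.node l' r')
    | some l', none => some l'
    | none, some r' => some r'
    | none, none => none

/-- OLA index of the sibling of the leaf labeled `i`, if it exists. -/
def siblingIdx : BTree → ℕ → Option ℤ
  | .leaf _, _ => none
  | .node l r, i =>
    if l = .leaf i then some r.idx
    else if r = .leaf i then some l.idx
    else (siblingIdx l i).orElse (fun _ => siblingIdx r i)

/-- The OLA vector entry of `t` at position `i ≥ 1`: the index of the sibling
of leaf `i` in the restriction of `t` to leaves `0, …, i`. -/
def olaEntry (t : BTree) (i : ℕ) : ℤ :=
  ((t.restrictLe i).bind (fun t' => t'.siblingIdx i)).getD 0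

def relabel (f : ℕ → ℕ) : BTree → BTree
  | .leaf x => .leaf (f x)
  | .node l r => .node (relabel f l) (relabel f r)

/-- The set of clusters (leaf sets of rooted subtrees) of `t`.  Two leaf-labeled
trees over the same leaf set are isomorphic iff their cluster sets coincide. -/
def clusters : BTree → Set (Set ℕ)
  | .leaf x => {{x}}
  | .node l r => insert {y | y ∈ (node l r).leafList} (clusters l ∪ clusters r)

def subtreeAt : BTree → List Bool → Option BTree
  | t, [] => some t
  | .leaf _, _ :: _ => none
  | .node l _, false :: p => subtreeAt l p
  | .node _ r, true :: p => subtreeAt r p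

/-- `w` occurs as a rooted subtree (i.e. the subtree below a node) of `t`. -/
def IsNode (t w : BTree) : Prop := ∃ p, t.subtreeAt p = some w

/-- The position of the least common ancestor of the leaves in `S`. -/
def lcaPos : BTree → Finset ℕ → List Bool
  | .leaf _, _ => []
  | .node l r, S =>
    if S ⊆ l.leafSet then false :: lcaPos l S
    else if S ⊆ r.leafSet then true :: lcaPos r S
    else []

/-- Positions of the nodes of the minimal spanning subtree `T(S)`. -/
def spanNodes (t : BTree) (S : Finset ℕ) : Set (List Bool) :=
  {p | t.lcaPos S <+: p ∧ ∃ u, t.subtreeAt p = some u ∧ ∃ x ∈ S, x ∈ u.leafList}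

end BTree

/-- OLA vector of tree `t` under the leaf ordering `σ` (leaf `x` is the
`σ x`-th leaf in the order). -/
def ola (t : BTree) (σ : Equiv.Perm ℕ) (i : ℕ) : ℤ :=
  (t.relabel σ).olaEntry i

/-- `σ` is a valid leaf ordering of the leaf set `{0, …, n-1}`. -/
def IsOrdering (σ : Equiv.Perm ℕ) (n : ℕ) : Prop := ∀ x < n, σ x < n

/-- The set of (corrected) mismatched indices among `{1, …, i}` of a family of
OLA vectors: an index is mismatched if two of the vectors differ there, or if
all vectors place that leaf above the internal node created by an
already-mismatched leaf. -/
noncomputable def mismatch {ι : Type*} (v : ι → ℕ → ℤ) : ℕ → Finset ℕ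
  | 0 => ∅
  | i + 1 =>
    let M := mismatch v i
    if (∃ a b : ι, v a (i+1) ≠ v b (i+1)) ∨ (∃ j ∈ M, ∀ a : ι, v a (i+1) = -(j : ℤ))
    then insert (i+1) M else M

/-- Corrected OLA distance of a family of OLA vectors of trees on `n` leaves. -/
noncomputable def corrDist {ι : Type*} (v : ι → ℕ → ℤ) (n : ℕ) : ℕ :=
  (mismatch v (n-1)).card

/-- Hamming OLA distance: the number of indices where at least two vectors differ. -/
noncomputable def hamDist {ι : Type*} (v : ι → ℕ → ℤ) (n : ℕ) : ℕ :=
  ((Finset.Icc 1 (n-1)).filter fun i => ∃ a b : ι, v a i ≠ v b i).card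

/-- `comp` is an agreement forest for the trees `ts` over leaf set `{0,…,n-1}`:
components have pairwise disjoint leaf sets partitioning the full leaf set,
each tree restricted to a component's leaves is isomorphic to the component,
and the spanning subtrees are node-disjoint in each tree. -/
def IsAF {ι : Type*} (ts : ι → BTree) (n : ℕ) {f : ℕ} (comp : Fin f → BTree) : Prop :=
  (∀ i, (comp i).leafList.Nodup) ∧
  (∀ i j, i ≠ j → Disjoint (comp i).leafSet (comp j).leafSet) ∧
  (Finset.univ.biUnion (fun i => (comp i).leafSet) = Finset.range n) ∧
  (∀ a i, ∃ c, (ts a).restrictTo (comp i).leafSet = some c ∧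
      c.clusters = (comp i).clusters) ∧
  (∀ a i j, i ≠ j →
      Disjoint (BTree.spanNodes (ts a) ((comp i).leafSet))
               (BTree.spanNodes (ts a) ((comp j).leafSet)))

/-- Edge of the inheritance graph: some tree has a directed path from the root
of the spanning subtree of component `i` down to that of component `j`. -/
def inhEdge {ι : Type*} (ts : ι → BTree) {f : ℕ} (comp : Fin f → BTree)
    (i j : Fin f) : Prop :=
  i ≠ j ∧ ∃ a, (BTree.lcaPos (ts a) ((comp i).leafSet)) <+:
      (BTree.lcaPos (ts a) ((comp j).leafSet))

/-- `comp` is an acyclic agreement forest for `ts`. -/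
def IsAAF {ι : Type*} (ts : ι → BTree) (n : ℕ) {f : ℕ} (comp : Fin f → BTree) : Prop :=
  IsAF ts n comp ∧ ∀ i, ¬ Relation.TransGen (inhEdge ts comp) i i

/-- Size of a maximum acyclic agreement forest (an AAF with fewest components). -/
noncomputable def maafSize {ι : Type*} (ts : ι → BTree) (n : ℕ) : ℕ :=
  sInf {f | ∃ comp : Fin f → BTree, IsAAF ts n comp}

end OLA
namespace OLA

/-- The index of the component `L_i` to which the leaf at position `j` belongs,
in the construction of an AAF from OLA vectors with mismatch set `M` and
consensus vector `v`: each mismatched position starts a new component, and a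
consensus position joins the component of the node it is placed above. -/
noncomputable def belongs (M : Finset ℕ) (v : ℕ → ℤ) : ℕ → ℕ
  | j =>
    if j ∈ M then (M.filter (· ≤ j)).card
    else if h : (v j).natAbs < j then belongs M v (v j).natAbs else 0
  termination_by j => j

/-- The `i`-th mismatched position (`m_0 = 0`). -/
noncomputable def mVal (M : Finset ℕ) (i : ℕ) : ℕ :=
  if i = 0 then 0 else (M.sort (· ≤ ·)).getD (i - 1) 0

namespace BTree

/-! ### Leaves, nodes and clusters -/

def leaves (t : BTree) : Set ℕ := {y | y ∈ t.leafList}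

@[simp] lemma mem_leaves {t : BTree} {y : ℕ} : y ∈ t.leaves ↔ y ∈ t.leafList := Iff.rfl

lemma coe_leafSet (t : BTree) : (t.leafSet : Set ℕ) = t.leaves := by
  ext; simp [leafSet]

@[simp] lemma leaves_leaf (x : ℕ) : (leaf x).leaves = {x} := by
  ext; simp [leafList]

@[simp] lemma mem_leafList_node {l r : BTree} {y : ℕ} :
    y ∈ (node l r).leafList ↔ y ∈ l.leafList ∨ y ∈ r.leafList := List.mem_append

lemma leaves_node (l r : BTree) : (node l r).leaves = l.leaves ∪ r.leaves := by
  ext; simp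

lemma clusters_node (l r : BTree) :
    (node l r).clusters = insert (node l r).leaves (l.clusters ∪ r.clusters) := rfl

lemma leaves_nonempty : ∀ t : BTree, t.leaves.Nonempty
  | .leaf x => ⟨x, by simp⟩
  | .node l _ => (leaves_nonempty l).mono (by simp [leaves_node])

lemma nodup_node_iff {l r : BTree} : (node l r).leafList.Nodup ↔
    l.leafList.Nodup ∧ r.leafList.Nodup ∧ Disjoint l.leaves r.leaves := by
  simp only [leafList, List.nodup_append, Set.disjoint_left, mem_leaves]
  exact and_congr_right fun _ => and_congr_right fun _ =>
    ⟨fun h y hl hr => h y hl y hr rfl, fun h y hl z hr hyz => h hl (hyz ▸ hr)⟩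

lemma minLeaf_mem : ∀ t : BTree, t.minLeaf ∈ t.leafList
  | .leaf x => by simp [minLeaf, leafList]
  | .node l r => by
    rcases min_cases l.minLeaf r.minLeaf with ⟨h, _⟩ | ⟨h, _⟩ <;>
      simp [minLeaf, h, minLeaf_mem l, minLeaf_mem r]

lemma minLeaf_le : ∀ t : BTree, ∀ y ∈ t.leafList, t.minLeaf ≤ y
  | .leaf x => by simp [minLeaf, leafList]
  | .node l r => by
    simp only [mem_leafList_node, minLeaf]
    rintro y (hy | hy)
    · exact (min_le_left _ _).trans (minLeaf_le l y hy)
    · exact (min_le_right _ _).trans (minLeaf_le r y hy)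

lemma minLeaf_eq_of_forall {t : BTree} {s : ℕ} (hs : s ∈ t.leafList)
    (h : ∀ y ∈ t.leafList, s ≤ y) : t.minLeaf = s :=
  le_antisymm (minLeaf_le t s hs) (h _ (minLeaf_mem t))

lemma natAbs_idx_mem : ∀ t : BTree, t.idx.natAbs ∈ t.leafList
  | .leaf x => by simp [idx, leafList]
  | .node l r => by
    rcases max_cases l.minLeaf r.minLeaf with ⟨h, _⟩ | ⟨h, _⟩ <;>
      simp [idx, ← Nat.cast_max, h, minLeaf_mem l, minLeaf_mem r]

lemma natAbs_idx_node (l r : BTree) :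
    (node l r).idx.natAbs = max l.minLeaf r.minLeaf := by
  simp [idx, ← Nat.cast_max]

lemma minLeaf_lt_natAbs_idx_node {l r : BTree} (hn : (node l r).leafList.Nodup) :
    (node l r).minLeaf < (node l r).idx.natAbs := by
  have hne : l.minLeaf ≠ r.minLeaf := fun he =>
    Set.disjoint_left.1 (nodup_node_iff.1 hn).2.2 (minLeaf_mem l) (he ▸ minLeaf_mem r)
  rw [natAbs_idx_node, minLeaf]
  exact min_lt_max.2 hne

lemma idx_node_neg {l r : BTree} (hn : (node l r).leafList.Nodup) : (node l r).idx < 0 := by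
  have := minLeaf_lt_natAbs_idx_node hn
  rw [natAbs_idx_node] at this
  simp only [idx, Left.neg_neg_iff]
  omega

lemma minLeaf_lt_natAbs_idx {u : BTree} (hn : u.leafList.Nodup) (h : u.idx < 0) :
    u.minLeaf < u.idx.natAbs := by
  cases u with
  | leaf x => exact absurd (Int.natCast_nonneg x) (not_le.2 h)
  | node l r => exact minLeaf_lt_natAbs_idx_node hn

lemma eq_leaf_of_idx_nonneg {u : BTree} (hn : u.leafList.Nodup) (h : 0 ≤ u.idx) :
    u = leaf u.idx.natAbs := by
  cases u with
  | leaf x => simp [idx]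
  | node l r => exact absurd (idx_node_neg hn) (not_lt.2 h)

lemma isNode_refl (t : BTree) : t.IsNode t := ⟨[], by cases t <;> rfl⟩

lemma isNode_leaf_iff {x : ℕ} {u : BTree} : (leaf x).IsNode u ↔ u = leaf x := by
  refine ⟨?_, fun h => h ▸ isNode_refl _⟩
  rintro ⟨_ | ⟨_, _⟩, h⟩ <;> simp [subtreeAt] at h
  exact h.symm

lemma isNode_node_iff {l r u : BTree} :
    (node l r).IsNode u ↔ u = node l r ∨ l.IsNode u ∨ r.IsNode u := by
  constructor
  · rintro ⟨_ | ⟨_ | _, p⟩, h⟩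
    · exact Or.inl (Option.some_inj.1 h).symm
    · exact Or.inr (Or.inl ⟨p, h⟩)
    · exact Or.inr (Or.inr ⟨p, h⟩)
  · rintro (rfl | ⟨p, h⟩ | ⟨p, h⟩)
    · exact isNode_refl _
    · exact ⟨false :: p, h⟩
    · exact ⟨true :: p, h⟩

lemma isNode_left (l r : BTree) : (node l r).IsNode l :=
  isNode_node_iff.2 (Or.inr (Or.inl (isNode_refl l)))

lemma isNode_right (l r : BTree) : (node l r).IsNode r :=
  isNode_node_iff.2 (Or.inr (Or.inr (isNode_refl r)))

lemma IsNode.trans {t u v : BTree} (h₁ : t.IsNode u) (h₂ : u.IsNode v) : t.IsNode v := by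
  induction t with
  | leaf x => rwa [isNode_leaf_iff.1 h₁] at h₂
  | node l r ihl ihr =>
    rcases isNode_node_iff.1 h₁ with rfl | h | h
    · exact h₂
    · exact isNode_node_iff.2 (Or.inr (Or.inl (ihl h)))
    · exact isNode_node_iff.2 (Or.inr (Or.inr (ihr h)))

lemma IsNode.leaves_subset {t u : BTree} (h : t.IsNode u) : u.leaves ⊆ t.leaves := by
  induction t with
  | leaf x => rw [isNode_leaf_iff.1 h]
  | node l r ihl ihr =>
    rw [leaves_node]
    rcases isNode_node_iff.1 h with rfl | h | h
    · rw [leaves_node]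
    · exact (ihl h).trans Set.subset_union_left
    · exact (ihr h).trans Set.subset_union_right

lemma IsNode.nodup {t u : BTree} (h : t.IsNode u) (hn : t.leafList.Nodup) :
    u.leafList.Nodup := by
  induction t with
  | leaf x => rwa [isNode_leaf_iff.1 h]
  | node l r ihl ihr =>
    obtain ⟨hl, hr, -⟩ := nodup_node_iff.1 hn
    rcases isNode_node_iff.1 h with rfl | h | h
    · exact hn
    · exact ihl h hl
    · exact ihr h hr

lemma IsNode.isNode_or_isNode {t u v : BTree} (hn : t.leafList.Nodup) (hu : t.IsNode u)
    (hv : t.IsNode v) {y : ℕ} (hyu : y ∈ u.leaves) (hyv : y ∈ v.leaves) :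
    u.IsNode v ∨ v.IsNode u := by
  induction t with
  | leaf x => rw [isNode_leaf_iff.1 hu, isNode_leaf_iff.1 hv]; exact Or.inl (isNode_refl _)
  | node l r ihl ihr =>
    obtain ⟨hl, hr, hlr⟩ := nodup_node_iff.1 hn
    rcases isNode_node_iff.1 hu with rfl | hu | hu
    · exact Or.inl hv
    all_goals rcases isNode_node_iff.1 hv with rfl | hv | hv
    · exact Or.inr (isNode_node_iff.2 (Or.inr (Or.inl hu)))
    · exact ihl hl hu hv
    · exact absurd (hv.leaves_subset hyv) (Set.disjoint_left.1 hlr (hu.leaves_subset hyu))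
    · exact Or.inr (isNode_node_iff.2 (Or.inr (Or.inr hu)))
    · exact absurd (hu.leaves_subset hyu) (Set.disjoint_left.1 hlr (hv.leaves_subset hyv))
    · exact ihr hr hu hv

lemma mem_clusters_iff {t : BTree} {C : Set ℕ} :
    C ∈ t.clusters ↔ ∃ u, t.IsNode u ∧ C = u.leaves := by
  induction t generalizing C with
  | leaf x => simp [clusters, isNode_leaf_iff]
  | node l r ihl ihr =>
    simp only [clusters_node, Set.mem_insert_iff, Set.mem_union, ihl, ihr, isNode_node_iff,
      or_and_right, exists_or, exists_eq_left]

lemma IsNode.leaves_mem_clusters {t u : BTree} (h : t.IsNode u) : u.leaves ∈ t.clusters :=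
  mem_clusters_iff.2 ⟨u, h, rfl⟩

lemma IsNode.leaves_subset_of_mem_clusters {t u : BTree} {C : Set ℕ} {y : ℕ}
    (hn : t.leafList.Nodup) (hu : t.IsNode u) (hneg : u.idx < 0) (hC : C ∈ t.clusters)
    (hx : u.idx.natAbs ∈ C) (hy : y ∈ C) (hyx : y < u.idx.natAbs) : u.leaves ⊆ C := by
  obtain ⟨v, hv, rfl⟩ := mem_clusters_iff.1 hC
  obtain ⟨l, r, rfl⟩ : ∃ l r, u = node l r := by
    cases u with
    | leaf x => exact absurd (Int.natCast_nonneg x) (not_le.2 hneg)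
    | node l r => exact ⟨l, r, rfl⟩
  obtain ⟨-, -, hlr⟩ := nodup_node_iff.1 (hu.nodup hn)
  rcases hu.isNode_or_isNode hn hv (natAbs_idx_mem _) hx with h | h
  -- a cluster inside one child cannot contain both the second smallest leaf and a smaller one
  · rw [natAbs_idx_node] at hx hyx
    rcases isNode_node_iff.1 h with rfl | h | h
    · exact subset_rfl
    · have := minLeaf_le l y (h.leaves_subset hy)
      have hxr : max l.minLeaf r.minLeaf = r.minLeaf := by omega
      exact absurd (minLeaf_mem r) (Set.disjoint_left.1 hlr (hxr ▸ h.leaves_subset hx))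
    · have := minLeaf_le r y (h.leaves_subset hy)
      have hxl : max l.minLeaf r.minLeaf = l.minLeaf := by omega
      exact absurd (minLeaf_mem l) (Set.disjoint_right.1 hlr (hxl ▸ h.leaves_subset hx))
  · exact h.leaves_subset

/-! ### Nodes are determined by their OLA index -/

lemma leaves_eq_of_idx_eq {ta tb u v : BTree} (ha : ta.leafList.Nodup) (hb : tb.leafList.Nodup)
    (hcl : ta.clusters = tb.clusters) (hu : ta.IsNode u) (hv : tb.IsNode v)
    (h : u.idx = v.idx) : u.leaves = v.leaves := by
  have hun := hu.nodup ha
  have hvn := hv.nodup hb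
  by_cases h0 : 0 ≤ u.idx
  · rw [eq_leaf_of_idx_nonneg hun h0, eq_leaf_of_idx_nonneg hvn (h ▸ h0), h]
  have hu0 : u.idx < 0 := not_le.1 h0
  have hv0 : v.idx < 0 := h ▸ hu0
  apply subset_antisymm
  · refine hu.leaves_subset_of_mem_clusters ha hu0 (hcl ▸ hv.leaves_mem_clusters) ?_
      (minLeaf_mem v) ?_ <;> rw [h]
    exacts [natAbs_idx_mem v, minLeaf_lt_natAbs_idx hvn hv0]
  · refine hv.leaves_subset_of_mem_clusters hb hv0 (hcl ▸ hu.leaves_mem_clusters) ?_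
      (minLeaf_mem u) ?_ <;> rw [← h]
    exacts [natAbs_idx_mem u, minLeaf_lt_natAbs_idx hun hu0]

lemma leaves_ne_of_subtreeAt_cons {t v : BTree} {b : Bool} {q : List Bool}
    (hn : t.leafList.Nodup) (h : t.subtreeAt (b :: q) = some v) : v.leaves ≠ t.leaves := by
  cases t with
  | leaf x => simp [subtreeAt] at h
  | node l r =>
    obtain ⟨-, -, hlr⟩ := nodup_node_iff.1 hn
    intro he
    cases b
    · have : r.minLeaf ∈ v.leaves := he ▸ (isNode_right l r).leaves_subset (minLeaf_mem r)
      exact Set.disjoint_left.1 hlr (IsNode.leaves_subset (t := l) ⟨q, h⟩ this) (minLeaf_mem r)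
    · have : l.minLeaf ∈ v.leaves := he ▸ (isNode_left l r).leaves_subset (minLeaf_mem l)
      exact Set.disjoint_left.1 hlr (minLeaf_mem l) (IsNode.leaves_subset (t := r) ⟨q, h⟩ this)

lemma pos_eq_of_leaves_eq {t u v : BTree} {p q : List Bool} (hn : t.leafList.Nodup)
    (hu : t.subtreeAt p = some u) (hv : t.subtreeAt q = some v) (h : u.leaves = v.leaves) :
    p = q := by
  induction t generalizing p q with
  | leaf x =>
    rcases p with _ | ⟨_, _⟩ <;> rcases q with _ | ⟨_, _⟩ <;> simp_all [subtreeAt]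
  | node l r ihl ihr =>
    obtain ⟨hl, hr, hlr⟩ := nodup_node_iff.1 hn
    rcases p with _ | ⟨b, p⟩ <;> rcases q with _ | ⟨b', q⟩
    · rfl
    · cases Option.some_inj.1 hu
      exact absurd h.symm (leaves_ne_of_subtreeAt_cons hn hv)
    · cases Option.some_inj.1 hv
      exact absurd h (leaves_ne_of_subtreeAt_cons hn hu)
    obtain ⟨y, hy⟩ := leaves_nonempty u
    cases b <;> cases b'
    · rw [ihl hl hu hv]
    · exact absurd (IsNode.leaves_subset (t := r) ⟨q, hv⟩ (h ▸ hy))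
        (Set.disjoint_left.1 hlr (IsNode.leaves_subset (t := l) ⟨p, hu⟩ hy))
    · exact absurd (IsNode.leaves_subset (t := l) ⟨q, hv⟩ (h ▸ hy))
        (Set.disjoint_right.1 hlr (IsNode.leaves_subset (t := r) ⟨p, hu⟩ hy))
    · rw [ihr hr hu hv]

lemma isNode_leaf_of_mem {t : BTree} {x : ℕ} (hx : x ∈ t.leafList) : t.IsNode (leaf x) := by
  induction t with
  | leaf y => simp only [leafList, List.mem_singleton] at hx; exact hx ▸ isNode_refl _
  | node l r ihl ihr =>
    rcases mem_leafList_node.1 hx with hx | hx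
    · exact (isNode_left l r).trans (ihl hx)
    · exact (isNode_right l r).trans (ihr hx)

lemma exists_isNode_idx_eq_neg {t : BTree} {x : ℕ} (hx : x ∈ t.leafList)
    (hxt : x ≠ t.minLeaf) : ∃ u, t.IsNode u ∧ u.idx = -x := by
  induction t with
  | leaf y => simp_all [leafList, minLeaf]
  | node l r ihl ihr =>
    simp only [minLeaf] at hxt
    by_cases hroot : max l.minLeaf r.minLeaf = x
    · exact ⟨node l r, isNode_refl _, by simp [idx, ← Nat.cast_max, hroot]⟩
    rcases mem_leafList_node.1 hx with hx | hx
    · obtain ⟨u, hu, h⟩ := ihl hx (by omega)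
      exact ⟨u, (isNode_left l r).trans hu, h⟩
    · obtain ⟨u, hu, h⟩ := ihr hx (by omega)
      exact ⟨u, (isNode_right l r).trans hu, h⟩

/-- The set `span(L)` of the paper, for `L` the leaf set of `t`. -/
def idxSpan (t : BTree) : Set ℤ :=
  {z | z = t.minLeaf ∨ (z.natAbs ∈ t.leafList ∧ z.natAbs ≠ t.minLeaf)}

lemma IsNode.idx_mem_idxSpan {t u : BTree} (hn : t.leafList.Nodup) (hu : t.IsNode u) :
    u.idx ∈ t.idxSpan := by
  have hmem : u.idx.natAbs ∈ t.leafList := hu.leaves_subset (natAbs_idx_mem u)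
  by_cases hmin : u.idx.natAbs = t.minLeaf
  · left
    by_cases h0 : 0 ≤ u.idx
    · rw [← hmin]; exact (Int.natAbs_of_nonneg h0).symm
    · have := minLeaf_lt_natAbs_idx (hu.nodup hn) (not_le.1 h0)
      have := minLeaf_le t _ (hu.leaves_subset (minLeaf_mem u))
      omega
  · exact Or.inr ⟨hmem, hmin⟩

lemma existsUnique_subtreeAt_idx_eq {t : BTree} (hn : t.leafList.Nodup) {z : ℤ}
    (hz : z ∈ t.idxSpan) : ∃! p, ∃ u, t.subtreeAt p = some u ∧ u.idx = z := by
  have hex : ∃ u, t.IsNode u ∧ u.idx = z := by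
    rcases hz with rfl | ⟨hz, hzmin⟩
    · exact ⟨_, isNode_leaf_of_mem (minLeaf_mem t), rfl⟩
    rcases Int.natAbs_eq z with h | h
    · exact ⟨_, isNode_leaf_of_mem hz, h.symm⟩
    · obtain ⟨u, hu, hidx⟩ := exists_isNode_idx_eq_neg hz hzmin
      exact ⟨u, hu, hidx.trans h.symm⟩
  obtain ⟨u, ⟨p, hp⟩, rfl⟩ := hex
  refine ⟨p, ⟨u, hp, rfl⟩, fun q ⟨v, hq, hv⟩ => ?_⟩
  exact pos_eq_of_leaves_eq hn hq hp (leaves_eq_of_idx_eq hn hn rfl ⟨q, hq⟩ ⟨p, hp⟩ hv)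

/-! ### Restrictions and traces of clusters -/

lemma restrictTo_elim (t : BTree) (S : Finset ℕ) :
    (t.restrictTo S).elim [] leafList = t.leafList.filter (· ∈ S) := by
  induction t with
  | leaf x => by_cases h : x ∈ S <;> simp [restrictTo, h, leafList]
  | node l r ihl ihr =>
    cases h1 : l.restrictTo S <;> cases h2 : r.restrictTo S <;>
      simp_all [restrictTo, leafList, List.filter_append]

lemma restrictTo_leafList {t t' : BTree} {S : Finset ℕ} (h : t.restrictTo S = some t') :
    t'.leafList = t.leafList.filter (· ∈ S) := by
  simpa [h] using restrictTo_elim t S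

lemma restrictTo_leaves {t t' : BTree} {S : Finset ℕ} (h : t.restrictTo S = some t') :
    t'.leaves = t.leaves ∩ S := by
  ext y; simp [restrictTo_leafList h]

lemma restrictTo_nodup {t t' : BTree} {S : Finset ℕ} (h : t.restrictTo S = some t')
    (hn : t.leafList.Nodup) : t'.leafList.Nodup :=
  restrictTo_leafList h ▸ hn.filter _

lemma notMem_of_restrictTo_eq_none {t : BTree} {S : Finset ℕ} (h : t.restrictTo S = none) :
    ∀ y ∈ t.leafList, y ∉ S := by
  have := restrictTo_elim t S
  rw [h, Option.elim_none, eq_comm, List.filter_eq_nil_iff] at this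
  simpa using this

lemma exists_restrictTo_eq_some {t : BTree} {S : Finset ℕ} {x : ℕ} (hx : x ∈ t.leafList)
    (hxS : x ∈ S) : ∃ t', t.restrictTo S = some t' :=
  Option.ne_none_iff_exists'.1 fun h => notMem_of_restrictTo_eq_none h x hx hxS

lemma restrictLe_eq (t : BTree) (i : ℕ) :
    t.restrictLe i = t.restrictTo (Finset.range (i + 1)) := by
  induction t with
  | leaf x => simp [restrictLe, restrictTo]
  | node l r ihl ihr => simp only [restrictLe, restrictTo, ihl, ihr]

def traces (t : BTree) (S : Finset ℕ) : Set (Set ℕ) :=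
  {E | ∃ C ∈ t.clusters, E = C ∩ S ∧ E.Nonempty}

lemma IsNode.leaves_inter_mem_traces {t u : BTree} {S : Finset ℕ} (hu : t.IsNode u)
    (h : (u.leaves ∩ S).Nonempty) : u.leaves ∩ S ∈ t.traces S :=
  ⟨_, hu.leaves_mem_clusters, rfl, h⟩

lemma traces_node (l r : BTree) (S : Finset ℕ) :
    (node l r).traces S =
      {E | E = (node l r).leaves ∩ S ∧ E.Nonempty} ∪ l.traces S ∪ r.traces S := by
  ext E
  simp only [traces, clusters_node, Set.mem_insert_iff, Set.mem_union, Set.mem_ofPred_eq,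
    or_and_right, exists_or, exists_eq_left, or_assoc]

lemma traces_eq_empty {t : BTree} {S : Finset ℕ} (h : ∀ y ∈ t.leafList, y ∉ S) :
    t.traces S = ∅ := by
  refine Set.eq_empty_of_forall_notMem fun E ⟨C, hC, hE, y, hy⟩ => ?_
  obtain ⟨u, hu, rfl⟩ := mem_clusters_iff.1 hC
  rw [hE] at hy
  exact h y (hu.leaves_subset hy.1) hy.2

lemma clusters_restrictTo {t t' : BTree} {S : Finset ℕ} (h : t.restrictTo S = some t') :
    t'.clusters = t.traces S := by
  induction t generalizing t' with
  | leaf x =>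
    by_cases hx : x ∈ S
    · simp only [restrictTo, hx, if_true, Option.some_inj] at h
      subst h
      ext E
      simpa [traces, clusters, hx] using fun h => h ▸ Set.singleton_nonempty x
    · simp [restrictTo, hx] at h
  | node l r ihl ihr =>
    rw [traces_node, leaves_node]
    cases h1 : l.restrictTo S <;> cases h2 : r.restrictTo S <;>
      simp only [restrictTo, h1, h2, reduceCtorEq, Option.some_inj] at h <;> subst h
    case none.some r' =>
      have hl := notMem_of_restrictTo_eq_none h1
      rw [traces_eq_empty hl, Set.union_empty, ihr h2, eq_comm, Set.union_eq_right]
      rintro E ⟨rfl, hne⟩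
      have hE : (l.leaves ∪ r.leaves) ∩ S = r.leaves ∩ S := by
        ext y; simpa using fun hyS hy => absurd hyS (hl y hy)
      rw [hE] at hne ⊢
      exact (isNode_refl r).leaves_inter_mem_traces hne
    case some.none l' =>
      have hr := notMem_of_restrictTo_eq_none h2
      rw [traces_eq_empty hr, Set.union_empty, ihl h1, eq_comm, Set.union_eq_right]
      rintro E ⟨rfl, hne⟩
      have hE : (l.leaves ∪ r.leaves) ∩ S = l.leaves ∩ S := by
        ext y; simpa using fun hyS hy => absurd hyS (hr y hy)
      rw [hE] at hne ⊢
      exact (isNode_refl l).leaves_inter_mem_traces hne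
    case some.some l' r' =>
      have hX : (node l' r').leaves = (l.leaves ∪ r.leaves) ∩ S := by
        rw [leaves_node, restrictTo_leaves h1, restrictTo_leaves h2,
          Set.union_inter_distrib_right]
      rw [clusters_node, ihl h1, ihr h2, Set.union_assoc, Set.insert_eq]
      congr 1
      ext E
      simp only [Set.mem_singleton_iff, Set.mem_ofPred_eq, ← hX]
      exact ⟨fun h => ⟨h, h ▸ leaves_nonempty _⟩, And.left⟩

lemma traces_restrictTo {t t' : BTree} {A S : Finset ℕ} (h : t.restrictTo A = some t')
    (hSA : S ⊆ A) : t'.traces S = t.traces S := by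
  have hA : ∀ C : Set ℕ, C ∩ A ∩ S = C ∩ S := fun C => by
    rw [Set.inter_assoc, Set.inter_eq_right.2 (Finset.coe_subset.2 hSA)]
  ext E
  simp only [traces, clusters_restrictTo h, Set.mem_ofPred_eq]
  constructor
  · rintro ⟨_, ⟨C, hC, rfl, -⟩, rfl, hne⟩
    exact ⟨C, hC, hA C, hA C ▸ hne⟩
  · rintro ⟨C, hC, rfl, hne⟩
    exact ⟨C ∩ A, ⟨C, hC, rfl, hne.mono fun y hy => ⟨hy.1, hSA hy.2⟩⟩, (hA C).symm,
      hne⟩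

lemma traces_singleton {t : BTree} {m : ℕ} (hm : m ∈ t.leafList) :
    t.traces {m} = {{m}} := by
  ext E
  constructor
  · rintro ⟨C, -, rfl, y, hy⟩
    rw [Finset.coe_singleton] at hy ⊢
    rw [Set.mem_singleton_iff, Set.inter_eq_right, Set.singleton_subset_iff]
    exact (Set.mem_singleton_iff.1 hy.2) ▸ hy.1
  · rintro rfl
    simpa using (isNode_leaf_of_mem hm).leaves_inter_mem_traces (S := {m}) (by simp)

lemma inter_subset_of_mem_traces {t u : BTree} {S : Finset ℕ} {E : Set ℕ} {y : ℕ}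
    (hn : t.leafList.Nodup) (hu : t.IsNode u) (hneg : u.idx < 0) (hE : E ∈ t.traces S)
    (hx : u.idx.natAbs ∈ E) (hy : y ∈ E) (hyx : y < u.idx.natAbs) : u.leaves ∩ S ⊆ E := by
  obtain ⟨C, hC, rfl, -⟩ := hE
  exact Set.inter_subset_inter_left _
    (hu.leaves_subset_of_mem_clusters hn hneg hC hx.1 hy.1 hyx)

lemma IsPhylo.mem_leafList_iff {t : BTree} {n : ℕ} (h : t.IsPhylo n) {y : ℕ} :
    y ∈ t.leafList ↔ y < n := by
  rw [← List.mem_toFinset, ← leafSet, h.2, Finset.mem_range]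

lemma IsPhylo.pos {t : BTree} {n : ℕ} (h : t.IsPhylo n) : 0 < n :=
  (Nat.zero_le _).trans_lt (h.mem_leafList_iff.1 (minLeaf_mem t))

lemma IsPhylo.exists_restrictTo {t : BTree} {n : ℕ} (h : t.IsPhylo n) {S : Finset ℕ}
    (hS : S ⊆ Finset.range n) {x : ℕ} (hx : x ∈ S) :
    ∃ t', t.restrictTo S = some t' ∧ t'.leafList.Nodup ∧ t'.leafSet = S := by
  obtain ⟨t', ht'⟩ :=
    exists_restrictTo_eq_some (h.mem_leafList_iff.2 (Finset.mem_range.1 (hS hx))) hx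
  refine ⟨t', ht', restrictTo_nodup ht' h.1, ?_⟩
  ext y
  simp only [leafSet, restrictTo_leafList ht', List.mem_toFinset, List.mem_filter,
    h.mem_leafList_iff, decide_eq_true_eq]
  exact ⟨And.right, fun hy => ⟨Finset.mem_range.1 (hS hy), hy⟩⟩

lemma IsPhylo.exists_restrictTo_idxSpan {t : BTree} {n s : ℕ} (h : t.IsPhylo n)
    {S : Finset ℕ} (hS : S ⊆ Finset.range n) (hs : s ∈ S) (hsS : ∀ j ∈ S, s ≤ j) :
    ∃ t', t.restrictTo S = some t' ∧ t'.leafList.Nodup ∧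
      t'.idxSpan = {z : ℤ | z = s ∨ (z.natAbs ∈ S ∧ z.natAbs ≠ s)} := by
  obtain ⟨t', ht', hnd, hleaf⟩ := h.exists_restrictTo hS hs
  have hmem (y : ℕ) : y ∈ t'.leafList ↔ y ∈ S := by rw [← hleaf]; simp [leafSet]
  have hmin : t'.minLeaf = s :=
    minLeaf_eq_of_forall ((hmem s).2 hs) fun y hy => hsS y ((hmem y).1 hy)
  exact ⟨t', ht', hnd, by simp only [idxSpan, hmem, hmin]⟩

lemma IsPhylo.relabel {t : BTree} {n : ℕ} {σ : Equiv.Perm ℕ} (h : t.IsPhylo n)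
    (hσ : IsOrdering σ n) : (t.relabel σ).IsPhylo n := by
  have hl : ∀ u : BTree, (u.relabel σ).leafList = u.leafList.map σ := by
    intro u; induction u <;> simp_all [BTree.relabel, leafList]
  refine ⟨hl t ▸ h.1.map σ.injective, ?_⟩
  apply Finset.eq_of_subset_of_card_le
  · intro y hy
    simp only [leafSet, hl, List.mem_toFinset, List.mem_map, h.mem_leafList_iff] at hy
    obtain ⟨x, hx, rfl⟩ := hy
    exact Finset.mem_range.2 (hσ x hx)
  · rw [leafSet, hl, List.toFinset_card_of_nodup (h.1.map σ.injective), List.length_map,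
      ← List.toFinset_card_of_nodup h.1, ← leafSet, h.2]

/-! ### Siblings and OLA entries -/

def IsSibling (t : BTree) (m : ℕ) (w : BTree) : Prop :=
  t.IsNode (node (leaf m) w) ∨ t.IsNode (node w (leaf m))

namespace IsSibling

variable {t w : BTree} {m : ℕ}

lemma exists_parent (h : t.IsSibling m w) : ∃ P, t.IsNode P ∧ P.leaves = insert m w.leaves ∧
    ∀ v, P.IsNode v ↔ v = P ∨ v = leaf m ∨ w.IsNode v := by
  rcases h with h | h <;> refine ⟨_, h, ?_, fun v => ?_⟩ <;>
    simp only [leaves_node, leaves_leaf, Set.singleton_union, Set.union_singleton,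
      isNode_node_iff, isNode_leaf_iff]
  exact or_congr_right or_comm

lemma of_isNode {u : BTree} (hu : t.IsNode u) (h : u.IsSibling m w) : t.IsSibling m w :=
  h.imp hu.trans hu.trans

lemma isNode (h : t.IsSibling m w) : t.IsNode w := by
  obtain ⟨P, hP, -, hPv⟩ := h.exists_parent
  exact hP.trans ((hPv w).2 (Or.inr (Or.inr (isNode_refl w))))

lemma mem (h : t.IsSibling m w) : m ∈ t.leafList := by
  obtain ⟨P, hP, hPl, -⟩ := h.exists_parent
  exact hP.leaves_subset (hPl ▸ Set.mem_insert m _)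

lemma notMem (h : t.IsSibling m w) (hn : t.leafList.Nodup) : m ∉ w.leaves := by
  rcases h with h | h <;> have := (nodup_node_iff.1 (h.nodup hn)).2.2
  · exact Set.disjoint_left.1 this (by simp)
  · exact Set.disjoint_right.1 this (by simp)

lemma insert_mem_clusters (h : t.IsSibling m w) : insert m w.leaves ∈ t.clusters := by
  obtain ⟨P, hP, hPl, -⟩ := h.exists_parent
  exact hPl ▸ hP.leaves_mem_clusters

lemma eq_or_subset (h : t.IsSibling m w) (hn : t.leafList.Nodup) {C : Set ℕ}
    (hC : C ∈ t.clusters) (hmC : m ∈ C) : C = {m} ∨ insert m w.leaves ⊆ C := by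
  obtain ⟨P, hP, hPl, hPv⟩ := h.exists_parent
  obtain ⟨v, hv, rfl⟩ := mem_clusters_iff.1 hC
  rcases hP.isNode_or_isNode hn hv (hPl ▸ Set.mem_insert m _) hmC with hPv' | hvP
  · rcases (hPv v).1 hPv' with rfl | rfl | hwv
    · exact Or.inr hPl.ge
    · exact Or.inl (leaves_leaf m)
    · exact absurd (hwv.leaves_subset hmC) (h.notMem hn)
  · exact Or.inr (hPl ▸ hvP.leaves_subset)

lemma subset_of_notMem (h : t.IsSibling m w) (hn : t.leafList.Nodup) {C : Set ℕ}
    (hC : C ∈ t.clusters) {x : ℕ} (hxw : x ∈ w.leaves) (hxC : x ∈ C) (hmC : m ∉ C) :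
    C ⊆ w.leaves := by
  obtain ⟨P, hP, hPl, hPv⟩ := h.exists_parent
  obtain ⟨v, hv, rfl⟩ := mem_clusters_iff.1 hC
  rcases hP.isNode_or_isNode hn hv (hPl ▸ Set.mem_insert_of_mem m hxw) hxC with hPv' | hvP
  · rcases (hPv v).1 hPv' with rfl | rfl | hwv
    · exact absurd (hPl ▸ Set.mem_insert m _) hmC
    · exact absurd (by simp) hmC
    · exact hwv.leaves_subset
  · exact absurd (hvP.leaves_subset (hPl ▸ Set.mem_insert m _)) hmC

end IsSibling

/-- Inserting a new leaf `m` as the sibling of the cluster `D` into a tree with clusters `T`: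
the clusters strictly containing `D` gain `m`, and `{m}` and `insert m D` are new. -/
def insertTraces (T : Set (Set ℕ)) (D : Set ℕ) (m : ℕ) : Set (Set ℕ) :=
  {E | E ∈ T ∧ ¬ D ⊂ E} ∪ {{m}} ∪ {F | ∃ E ∈ T, D ⊆ E ∧ F = insert m E}

section insertTraces

variable {t w : BTree} {m x : ℕ} {S : Finset ℕ}

lemma traces_insert_subset (hn : t.leafList.Nodup) (hsib : t.IsSibling m w)
    (hx : x ∈ w.leaves ∩ S) :
    t.traces (insert m S) ⊆ insertTraces (t.traces S) (w.leaves ∩ S) m := by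
  rintro _ ⟨C, hC, rfl, hne⟩
  rw [Finset.coe_insert] at hne ⊢
  by_cases hmC : m ∈ C
  · rcases hsib.eq_or_subset hn hC hmC with rfl | hPC
    · exact Or.inl (Or.inr (by simp))
    refine Or.inr ⟨C ∩ S, ⟨C, hC, rfl, x, hPC (Set.mem_insert_of_mem m hx.1), hx.2⟩,
      Set.inter_subset_inter_left _ ((Set.subset_insert m _).trans hPC), ?_⟩
    rw [Set.inter_insert_of_mem hmC]
  · rw [Set.inter_insert_of_notMem hmC] at hne ⊢
    refine Or.inl (Or.inl ⟨⟨C, hC, rfl, hne⟩, fun hlt => hlt.2 ?_⟩)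
    exact Set.inter_subset_inter_left _
      (hsib.subset_of_notMem hn hC hx.1 (hlt.1 hx).1 hmC)

lemma insertTraces_subset (hn : t.leafList.Nodup) (hsib : t.IsSibling m w) (hmS : m ∉ S)
    (hx : x ∈ w.leaves ∩ S) :
    insertTraces (t.traces S) (w.leaves ∩ S) m ⊆ t.traces (insert m S) := by
  have hmW := hsib.notMem hn
  rintro _ ((⟨⟨C, hC, rfl, hne⟩, hnlt⟩ | rfl) | ⟨_, ⟨C, hC, rfl, hne⟩, hDC, rfl⟩)
  · by_cases hmC : m ∈ C
    · rcases hsib.eq_or_subset hn hC hmC with rfl | hPC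
      · simp [hmS] at hne
      have hCD : C ∩ S = w.leaves ∩ S := by
        by_contra hne'
        exact hnlt (ssubset_of_subset_of_ne
          (Set.inter_subset_inter_left _ ((Set.subset_insert m _).trans hPC)) (Ne.symm hne'))
      exact ⟨w.leaves, hsib.isNode.leaves_mem_clusters,
        by rw [Finset.coe_insert, Set.inter_insert_of_notMem hmW, hCD], hne⟩
    · exact ⟨C, hC, by rw [Finset.coe_insert, Set.inter_insert_of_notMem hmC], hne⟩
  · exact ⟨{m}, leaves_leaf m ▸ (isNode_leaf_of_mem hsib.mem).leaves_mem_clusters, by simp,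
      by simp⟩
  · by_cases hmC : m ∈ C
    · exact ⟨C, hC, by rw [Finset.coe_insert, Set.inter_insert_of_mem hmC],
        Set.insert_nonempty _ _⟩
    have hCD : C ∩ S = w.leaves ∩ S := (Set.inter_subset_inter_left _
      (hsib.subset_of_notMem hn hC hx.1 (hDC hx).1 hmC)).antisymm hDC
    exact ⟨insert m w.leaves, hsib.insert_mem_clusters,
      by rw [Finset.coe_insert, hCD, Set.insert_inter_distrib], Set.insert_nonempty _ _⟩

lemma traces_insert (hn : t.leafList.Nodup) (hsib : t.IsSibling m w) (hmS : m ∉ S)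
    (hx : x ∈ w.leaves ∩ S) :
    t.traces (insert m S) = insertTraces (t.traces S) (w.leaves ∩ S) m :=
  (traces_insert_subset hn hsib hx).antisymm (insertTraces_subset hn hsib hmS hx)

end insertTraces

lemma siblingIdx_eq_none {t : BTree} {m : ℕ} (hm : m ∉ t.leafList) : t.siblingIdx m = none := by
  induction t with
  | leaf x => rfl
  | node l r ihl ihr =>
    simp only [mem_leafList_node, not_or] at hm
    have hl : l ≠ leaf m := by rintro rfl; simp [leafList] at hm
    have hr : r ≠ leaf m := by rintro rfl; simp [leafList] at hm
    simp [siblingIdx, hl, hr, ihl hm.1, ihr hm.2]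

lemma exists_isSibling {t : BTree} {m : ℕ} (hn : t.leafList.Nodup) (hm : m ∈ t.leafList)
    (ht : ∀ x, t ≠ leaf x) : ∃ w, t.IsSibling m w ∧ t.siblingIdx m = some w.idx := by
  induction t with
  | leaf x => exact absurd rfl (ht x)
  | node l r ihl ihr =>
    obtain ⟨hnl, hnr, hlr⟩ := nodup_node_iff.1 hn
    by_cases hl : l = leaf m
    · subst hl
      exact ⟨r, Or.inl (isNode_refl _), by simp [siblingIdx]⟩
    by_cases hr : r = leaf m
    · subst hr
      exact ⟨l, Or.inr (isNode_refl _), by simp [siblingIdx, hl]⟩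
    rcases mem_leafList_node.1 hm with hml | hmr
    · obtain ⟨w, hw, hidx⟩ := ihl hnl hml (by rintro x rfl; simp_all [leafList])
      exact ⟨w, hw.of_isNode (isNode_left l r), by simp [siblingIdx, hl, hr, hidx]⟩
    · obtain ⟨w, hw, hidx⟩ := ihr hnr hmr (by rintro x rfl; simp_all [leafList])
      have hml : m ∉ l.leafList := fun hml => Set.disjoint_left.1 hlr hml hmr
      exact ⟨w, hw.of_isNode (isNode_right l r),
        by simp [siblingIdx, hl, hr, siblingIdx_eq_none hml, hidx]⟩

lemma IsPhylo.olaEntry_spec {t : BTree} {n j : ℕ} (h : t.IsPhylo n) (hj : 1 ≤ j) (hjn : j < n) :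
    ∃ tj w, t.restrictLe j = some tj ∧ tj.IsPhylo (j + 1) ∧ tj.IsSibling j w ∧
      t.olaEntry j = w.idx := by
  obtain ⟨tj, htj, hphy⟩ := h.exists_restrictTo (S := Finset.range (j + 1))
    (Finset.range_subset_range.2 hjn) (Finset.mem_range.2 j.lt_succ_self)
  rw [← restrictLe_eq] at htj
  have hnode : ∀ x, tj ≠ leaf x := by
    rintro x rfl
    have h0 := (IsPhylo.mem_leafList_iff hphy).2 (Nat.succ_pos j)
    have hj' := (IsPhylo.mem_leafList_iff hphy).2 j.lt_succ_self
    simp only [leafList, List.mem_singleton] at h0 hj'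
    omega
  obtain ⟨w, hw, hidx⟩ :=
    exists_isSibling hphy.1 ((IsPhylo.mem_leafList_iff hphy).2 j.lt_succ_self) hnode
  exact ⟨tj, w, htj, hphy, hw, by simp [olaEntry, htj, hidx]⟩

lemma IsPhylo.natAbs_olaEntry_lt {t : BTree} {n j : ℕ} (h : t.IsPhylo n) (hj : 1 ≤ j)
    (hjn : j < n) : (t.olaEntry j).natAbs < j := by
  obtain ⟨tj, w, -, hphy, hw, hidx⟩ := h.olaEntry_spec hj hjn
  have hmem : (t.olaEntry j).natAbs ∈ w.leaves := hidx ▸ natAbs_idx_mem w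
  have := hphy.mem_leafList_iff.1 (hw.isNode.leaves_subset hmem)
  have : (t.olaEntry j).natAbs ≠ j := fun he => hw.notMem hphy.1 (he ▸ hmem)
  omega

/-- `w ∩ [0, x]` is a cluster of `T^x` containing `x` and another leaf, hence also the sibling
of `x` in `T^x`. -/
lemma IsPhylo.natAbs_olaEntry_mem {t tm w : BTree} {n m x y : ℕ} (h : t.IsPhylo n)
    (htm : t.restrictLe m = some tm) (hw : tm.IsNode w) (hxm : x ≤ m) (hx : x ∈ w.leaves)
    (hy : y ∈ w.leaves) (hyx : y < x) : (t.olaEntry x).natAbs ∈ w.leaves := by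
  rw [restrictLe_eq] at htm
  have hxn : x < n := h.mem_leafList_iff.1 ((restrictTo_leaves htm ▸ hw.leaves_subset hx).1)
  obtain ⟨tx, v, htx, hphy, hv, hidx⟩ := h.olaEntry_spec (by omega) hxn
  rw [restrictLe_eq] at htx
  have hE : w.leaves ∩ ↑(Finset.range (x + 1)) ∈ tx.clusters := by
    rw [clusters_restrictTo htx, ← traces_restrictTo htm (Finset.range_subset_range.2 (by omega))]
    exact hw.leaves_inter_mem_traces ⟨x, hx, by simp⟩
  rcases hv.eq_or_subset hphy.1 hE ⟨hx, by simp⟩ with hE' | hsub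
  · have : y ∈ w.leaves ∩ ↑(Finset.range (x + 1)) := ⟨hy, Finset.mem_coe.2 (Finset.mem_range.2 (by omega))⟩
    rw [hE', Set.mem_singleton_iff] at this
    omega
  · exact (hsub (Set.mem_insert_of_mem _ (hidx ▸ natAbs_idx_mem v))).1

/-! ### Clusters of restrictions from OLA entries -/

/-- When the common index is `-x`, the entry at `x` is a smaller leaf of `S` lying in both nodes,
and a trace containing `x` and a smaller leaf contains the whole node. -/
lemma leaves_inter_eq_of_idx_eq {t₁ t₂ u₁ u₂ w₁ w₂ : BTree} {n m : ℕ} {S : Finset ℕ}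
    (h₁ : t₁.IsPhylo n) (h₂ : t₂.IsPhylo n) (hmn : m < n)
    (hu₁ : t₁.restrictLe m = some u₁) (hu₂ : t₂.restrictLe m = some u₂)
    (hw₁ : u₁.IsNode w₁) (hw₂ : u₂.IsNode w₂) (hidx : w₁.idx = w₂.idx)
    (hSm : ∀ j ∈ S, j < m) (htr : u₁.traces S = u₂.traces S) (hxS : w₁.idx.natAbs ∈ S)
    (hchain : w₁.idx < 0 → t₁.olaEntry w₁.idx.natAbs = t₂.olaEntry w₁.idx.natAbs ∧
      (t₁.olaEntry w₁.idx.natAbs).natAbs ∈ S) :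
    w₁.leaves ∩ S = w₂.leaves ∩ S := by
  have hn₁ := restrictTo_nodup (restrictLe_eq t₁ m ▸ hu₁) h₁.1
  have hn₂ := restrictTo_nodup (restrictLe_eq t₂ m ▸ hu₂) h₂.1
  have hwn₁ := hw₁.nodup hn₁
  have hwn₂ := hw₂.nodup hn₂
  by_cases h0 : 0 ≤ w₁.idx
  · rw [eq_leaf_of_idx_nonneg hwn₁ h0, eq_leaf_of_idx_nonneg hwn₂ (hidx ▸ h0), hidx]
  have hneg₁ : w₁.idx < 0 := not_le.1 h0
  have hneg₂ : w₂.idx < 0 := hidx ▸ hneg₁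
  obtain ⟨hagree, hyS⟩ := hchain hneg₁
  have hxm : w₁.idx.natAbs < m := hSm _ hxS
  have hmin₁ := minLeaf_lt_natAbs_idx hwn₁ hneg₁
  have hmin₂ := minLeaf_lt_natAbs_idx hwn₂ hneg₂
  have hx₁ := natAbs_idx_mem w₁
  have hx₂ := natAbs_idx_mem w₂
  rw [← hidx] at hmin₂ hx₂
  have hy₁ := h₁.natAbs_olaEntry_mem hu₁ hw₁ hxm.le hx₁ (minLeaf_mem w₁) hmin₁
  have hy₂ := h₂.natAbs_olaEntry_mem hu₂ hw₂ hxm.le hx₂ (minLeaf_mem w₂) hmin₂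
  rw [← hagree] at hy₂
  have hyx := h₁.natAbs_olaEntry_lt (by omega) (hxm.trans hmn)
  apply subset_antisymm
  · exact inter_subset_of_mem_traces hn₁ hw₁ hneg₁
      (htr ▸ hw₂.leaves_inter_mem_traces ⟨_, hx₂, hxS⟩) ⟨hx₂, hxS⟩ ⟨hy₂, hyS⟩ hyx
  · have := inter_subset_of_mem_traces (y := (t₁.olaEntry w₁.idx.natAbs).natAbs) hn₂ hw₂
      hneg₂ (htr.symm ▸ hw₁.leaves_inter_mem_traces ⟨_, hx₁, hxS⟩)
    rw [← hidx] at this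
    exact this ⟨hx₁, hxS⟩ ⟨hy₁, hyS⟩ hyx

lemma traces_insert_eq_of_olaEntry {t₁ t₂ : BTree} {n m : ℕ} {S : Finset ℕ}
    (h₁ : t₁.IsPhylo n) (h₂ : t₂.IsPhylo n) (hmn : m < n) (hlt : ∀ j ∈ S, j < m)
    (htr : t₁.traces S = t₂.traces S) (hagree : t₁.olaEntry m = t₂.olaEntry m)
    (hxS : (t₁.olaEntry m).natAbs ∈ S)
    (hchain : t₁.olaEntry m < 0 →
      t₁.olaEntry (t₁.olaEntry m).natAbs = t₂.olaEntry (t₁.olaEntry m).natAbs ∧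
      (t₁.olaEntry (t₁.olaEntry m).natAbs).natAbs ∈ S) :
    t₁.traces (insert m S) = t₂.traces (insert m S) := by
  have hm : 1 ≤ m := by have := hlt _ hxS; omega
  obtain ⟨u₁, w₁, hu₁, hp₁, hw₁, he₁⟩ := h₁.olaEntry_spec hm hmn
  obtain ⟨u₂, w₂, hu₂, hp₂, hw₂, he₂⟩ := h₂.olaEntry_spec hm hmn
  have hidx : w₁.idx = w₂.idx := he₁ ▸ he₂ ▸ hagree
  rw [he₁] at hxS hchain
  have hsub : insert m S ⊆ Finset.range (m + 1) := Finset.insert_subset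
    (Finset.self_mem_range_succ m) fun j hj => Finset.mem_range.2 ((hlt j hj).trans m.lt_succ_self)
  have hSsub : S ⊆ Finset.range (m + 1) := (Finset.subset_insert m S).trans hsub
  have hu₁' := restrictLe_eq t₁ m ▸ hu₁
  have hu₂' := restrictLe_eq t₂ m ▸ hu₂
  have htr' : u₁.traces S = u₂.traces S := by
    rw [traces_restrictTo hu₁' hSsub, traces_restrictTo hu₂' hSsub, htr]
  have hmS : m ∉ S := fun h => lt_irrefl m (hlt m h)
  rw [← traces_restrictTo hu₁' hsub, ← traces_restrictTo hu₂' hsub,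
    traces_insert hp₁.1 hw₁ hmS ⟨natAbs_idx_mem w₁, hxS⟩,
    traces_insert hp₂.1 hw₂ hmS ⟨hidx ▸ natAbs_idx_mem w₂, hidx ▸ hxS⟩, htr',
    leaves_inter_eq_of_idx_eq h₁ h₂ hmn hu₁ hu₂ hw₁.isNode hw₂.isNode hidx hlt htr' hxS
      hchain]

theorem traces_eq_of_olaEntry {t₁ t₂ : BTree} {n s : ℕ} (h₁ : t₁.IsPhylo n)
    (h₂ : t₂.IsPhylo n) {S : Finset ℕ} (hSn : ∀ j ∈ S, j < n) (hs : s ∈ S)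
    (hsS : ∀ j ∈ S, s ≤ j)
    (hS : ∀ j ∈ S, j ≠ s → t₁.olaEntry j = t₂.olaEntry j ∧
      (t₁.olaEntry j).natAbs ∈ S ∧ (0 < s → t₁.olaEntry j ≠ -s)) :
    t₁.traces S = t₂.traces S := by
  induction S using Finset.induction_on_max with
  | empty => simp at hs
  | insert m S hlt ih =>
    have hmn := hSn m (Finset.mem_insert_self m S)
    rcases S.eq_empty_or_nonempty with rfl | ⟨j₀, hj₀⟩
    · rw [insert_empty_eq, traces_singleton (h₁.mem_leafList_iff.2 hmn),
        traces_singleton (h₂.mem_leafList_iff.2 hmn)]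
    have hsm : s < m := (hsS j₀ (Finset.mem_insert_of_mem hj₀)).trans_lt (hlt j₀ hj₀)
    -- an entry points strictly below its position, so never to `m`
    have hmem : ∀ j ∈ insert m S, j ≠ s → j ≤ m → (t₁.olaEntry j).natAbs ∈ S := by
      intro j hj hjs hjm
      have := h₁.natAbs_olaEntry_lt (by have := hsS j hj; omega) (hSn j hj)
      exact (Finset.mem_insert.1 (hS j hj hjs).2.1).resolve_left (by omega)
    have hm := Finset.mem_insert_self m S
    obtain ⟨hagree, -, hns⟩ := hS m hm hsm.ne'
    refine traces_insert_eq_of_olaEntry h₁ h₂ hmn hlt ?_ hagree (hmem m hm hsm.ne' le_rfl)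
      fun hneg => ?_
    · refine ih (fun j hj => hSn j (Finset.mem_insert_of_mem hj))
        ((Finset.mem_insert.1 hs).resolve_left hsm.ne)
        (fun j hj => hsS j (Finset.mem_insert_of_mem hj)) fun j hj hjs => ?_
      have hj' : j ∈ insert m S := Finset.mem_insert_of_mem hj
      exact ⟨(hS j hj' hjs).1, hmem j hj' hjs (hlt j hj).le, (hS j hj' hjs).2.2⟩
    · have hx : (t₁.olaEntry m).natAbs ∈ insert m S :=
        Finset.mem_insert_of_mem (hmem m hm hsm.ne' le_rfl)
      have hxs : (t₁.olaEntry m).natAbs ≠ s := fun hxs => hns (by omega) (by omega)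
      exact ⟨(hS _ hx hxs).1, hmem _ hx hxs (hlt _ (hmem m hm hsm.ne' le_rfl)).le⟩

end BTree

/-! ### Mismatches and the components `L_i` -/

section Mismatch

variable {ι : Type*} (v : ι → ℕ → ℤ)

lemma mismatch_subset_Icc (i : ℕ) : mismatch v i ⊆ Finset.Icc 1 i := by
  induction i with
  | zero => simp [mismatch]
  | succ i ih =>
    have h := ih.trans (Finset.Icc_subset_Icc_right i.le_succ)
    simp only [mismatch]
    split_ifs
    exacts [Finset.insert_subset (by simp) h, h]

lemma mismatch_mono : Monotone (mismatch v) :=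
  monotone_nat_of_le_succ fun i => by
    simp only [mismatch]
    split_ifs
    exacts [Finset.subset_insert _ _, subset_rfl]

lemma mem_mismatch_iff {j N : ℕ} (hjN : j ≤ N) : j ∈ mismatch v N ↔ j ∈ mismatch v j := by
  induction N, hjN using Nat.le_induction with
  | base => rfl
  | succ N hjN ih =>
    rw [← ih]
    simp only [mismatch]
    split_ifs
    · exact Finset.mem_insert.trans (or_iff_right (by omega))
    · rfl

lemma consensus_of_notMem_mismatch {j N : ℕ} (hj : 1 ≤ j) (hjN : j ≤ N)
    (hjM : j ∉ mismatch v N) :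
    (∀ a b, v a j = v b j) ∧ ∀ j' ∈ mismatch v N, j' < j → ∀ a, v a j ≠ -j' := by
  obtain ⟨k, rfl⟩ : ∃ k, j = k + 1 := ⟨j - 1, by omega⟩
  rw [mem_mismatch_iff v hjN] at hjM
  simp only [mismatch] at hjM
  split_ifs at hjM with hc
  · exact absurd (Finset.mem_insert_self _ _) hjM
  push Not at hc
  refine ⟨hc.1, fun j' hj' hj'k a ha => ?_⟩
  rw [mem_mismatch_iff v (by omega : j' ≤ N)] at hj'
  obtain ⟨b, hb⟩ := hc.2 j' (mismatch_mono v (by omega : j' ≤ k) hj')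
  exact hb ((hc.1 b a).trans ha)

end Mismatch

section Components

variable (M : Finset ℕ) (v : ℕ → ℤ)

/-- The positions `j < n` whose leaf is put into `L_i`. -/
noncomputable def component (n i : ℕ) : Finset ℕ :=
  (Finset.range n).filter fun j => belongs M v j = i

lemma belongs_le_card (j : ℕ) : belongs M v j ≤ M.card := by
  induction j using Nat.strong_induction_on with
  | _ j ih =>
    rw [belongs]
    split_ifs with h1 h2
    exacts [Finset.card_filter_le _ _, ih _ h2, Nat.zero_le _]

lemma biUnion_component (n : ℕ) :
    (Finset.range (M.card + 1)).biUnion (component M v n) = Finset.range n := by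
  ext j
  simp only [component, Finset.mem_biUnion, Finset.mem_range, Finset.mem_filter]
  exact ⟨fun ⟨_, _, hj, _⟩ => hj,
    fun hj => ⟨_, Nat.lt_succ_of_le (belongs_le_card M v j), hj, rfl⟩⟩

lemma card_filter_le_mVal {i : ℕ} (hi : 1 ≤ i) (hiM : i ≤ M.card) :
    mVal M i ∈ M ∧ (M.filter (· ≤ mVal M i)).card = i := by
  set e := M.orderEmbOfFin rfl
  have hk : i - 1 < M.card := by omega
  have he : mVal M i = e ⟨i - 1, hk⟩ := by
    rw [mVal, if_neg (by omega), Finset.orderEmbOfFin_apply,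
      List.getD_eq_getElem _ _ (by rw [Finset.length_sort]; exact hk)]
    rfl
  refine ⟨he ▸ M.orderEmbOfFin_mem rfl _, ?_⟩
  have : M.filter (· ≤ mVal M i) =
      (Finset.Iic (⟨i - 1, hk⟩ : Fin M.card)).map e.toEmbedding := by
    ext y
    simp only [Finset.mem_filter, Finset.mem_map, Finset.mem_Iic, he]
    constructor
    · rintro ⟨hy, hle⟩
      obtain ⟨k, rfl⟩ : y ∈ Set.range e := by rw [Finset.range_orderEmbOfFin]; exact hy
      exact ⟨k, e.le_iff_le.1 hle, rfl⟩
    · rintro ⟨k, hk, rfl⟩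
      exact ⟨M.orderEmbOfFin_mem rfl k, e.le_iff_le.2 hk⟩
  rw [this, Finset.card_map, Fin.card_Iic]
  dsimp only
  omega

lemma eq_of_card_filter_le_eq {j j' : ℕ} (hj : j ∈ M) (hj' : j' ∈ M)
    (h : (M.filter (· ≤ j)).card = (M.filter (· ≤ j')).card) : j = j' := by
  wlog hle : j ≤ j' generalizing j j'
  · exact (this hj' hj h.symm (by omega)).symm
  have hsub : M.filter (· ≤ j) ⊆ M.filter (· ≤ j') := fun y hy => by
    simp only [Finset.mem_filter] at hy ⊢
    exact ⟨hy.1, hy.2.trans hle⟩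
  have hj'j : j' ∈ M.filter (· ≤ j) := by
    rw [Finset.eq_of_subset_of_card_le hsub h.ge]
    exact Finset.mem_filter.2 ⟨hj', le_rfl⟩
  exact le_antisymm hle (Finset.mem_filter.1 hj'j).2

lemma belongs_zero (h0 : 0 ∉ M) : belongs M v 0 = 0 := by
  rw [belongs, if_neg h0, dif_neg (Nat.not_lt_zero _)]

lemma belongs_mVal (h0 : 0 ∉ M) {i : ℕ} (hi : i ≤ M.card) : belongs M v (mVal M i) = i := by
  rcases i.eq_zero_or_pos with rfl | hi1
  · rw [mVal, if_pos rfl, belongs_zero M v h0]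
  · obtain ⟨hm, hrank⟩ := card_filter_le_mVal M hi1 hi
    rw [belongs, if_pos hm, hrank]

lemma eq_mVal_of_mem {i j : ℕ} (hjM : j ∈ M) (hj : belongs M v j = i) : j = mVal M i := by
  rw [belongs, if_pos hjM] at hj
  have hi : 1 ≤ i := hj ▸ Finset.card_pos.2 ⟨j, Finset.mem_filter.2 ⟨hjM, le_rfl⟩⟩
  obtain ⟨hm, hrank⟩ := card_filter_le_mVal M hi (hj ▸ Finset.card_filter_le _ _)
  exact eq_of_card_filter_le_eq M hjM hm (hj.trans hrank.symm)

lemma mVal_le_of_belongs_eq {i j : ℕ} (hj : belongs M v j = i) : mVal M i ≤ j := by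
  induction j using Nat.strong_induction_on with
  | _ j ih =>
    by_cases hjM : j ∈ M
    · exact (eq_mVal_of_mem M v hjM hj).ge
    rw [belongs, if_neg hjM] at hj
    split_ifs at hj with hlt
    · exact (ih _ hlt hj).trans hlt.le
    · simp [← hj, mVal]

lemma belongs_natAbs {j : ℕ} (hjM : j ∉ M) (hj : (v j).natAbs < j) :
    belongs M v (v j).natAbs = belongs M v j := by
  conv_rhs => rw [belongs, if_neg hjM, dif_pos hj]

lemma mVal_mem_component {n i : ℕ} (hM : M ⊆ Finset.Icc 1 (n - 1)) (hn : 0 < n)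
    (hi : i ≤ M.card) : mVal M i ∈ component M v n i := by
  have h0 : 0 ∉ M := fun h => by simpa using hM h
  refine Finset.mem_filter.2 ⟨Finset.mem_range.2 ?_, belongs_mVal M v h0 hi⟩
  rcases i.eq_zero_or_pos with rfl | hi1
  · simpa [mVal] using hn
  · have := Finset.mem_Icc.1 (hM (card_filter_le_mVal M hi1 hi).1)
    omega

end Components

theorem traces_component_eq {ι : Type*} {T : ι → BTree} {n : ℕ} (hT : ∀ a, (T a).IsPhylo n)
    (a₀ : ι) {i : ℕ} (hi : i ≤ (mismatch (fun a => (T a).olaEntry) (n - 1)).card) (a b : ι) :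
    (T a).traces (component (mismatch (fun a => (T a).olaEntry) (n - 1)) (T a₀).olaEntry n i) =
      (T b).traces
        (component (mismatch (fun a => (T a).olaEntry) (n - 1)) (T a₀).olaEntry n i) := by
  set M := mismatch (fun a => (T a).olaEntry) (n - 1)
  set v := (T a₀).olaEntry
  have h0 : 0 ∉ M := fun h => by simpa using mismatch_subset_Icc _ _ h
  have hcomp {j : ℕ} : j ∈ component M v n i ↔ j < n ∧ belongs M v j = i := by
    simp [component]
  refine BTree.traces_eq_of_olaEntry (hT a) (hT b) (fun j hj => (hcomp.1 hj).1)
    (mVal_mem_component M v (mismatch_subset_Icc _ _) (hT a₀).pos hi)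
    (fun j hj => mVal_le_of_belongs_eq M v (hcomp.1 hj).2) fun j hj hjs => ?_
  obtain ⟨hjn, hj⟩ := hcomp.1 hj
  have hjM : j ∉ M := fun hjM => hjs (eq_mVal_of_mem M v hjM hj)
  have hj1 : 1 ≤ j := by
    by_contra! hj0
    obtain rfl : j = 0 := by omega
    rw [belongs_zero M v h0] at hj
    exact hjs (by simp [← hj, mVal])
  obtain ⟨hagree, hnot⟩ := consensus_of_notMem_mismatch _ hj1 (by omega) hjM
  have hlt := (hT a₀).natAbs_olaEntry_lt hj1 hjn
  refine ⟨hagree a b,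
    hagree a a₀ ▸ hcomp.2 ⟨by omega, (belongs_natAbs M v hjM hlt).trans hj⟩,
    fun hs => hnot _ ?_ ?_ a⟩
  · exact (card_filter_le_mVal M (Nat.pos_of_ne_zero fun h => by simp [h, mVal] at hs) hi).1
  · exact lt_of_le_of_ne (mVal_le_of_belongs_eq M v hj) (Ne.symm hjs)

theorem stmt9_general {ι : Type} (n : ℕ)
    (ts : ι → BTree) (hts : ∀ a, (ts a).IsPhylo n)
    (σ : Equiv.Perm ℕ) (hσ : IsOrdering σ n) (a₀ : ι) :
    let v : ℕ → ℤ := fun j => ola (ts a₀) σ j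
    let M : Finset ℕ := mismatch (fun a => ola (ts a) σ) (n - 1)
    let P : ℕ → Finset ℕ := fun i => (Finset.range n).filter (fun j => belongs M v j = i)
    let span : ℕ → Set ℤ := fun i =>
      {z | z = (mVal M i : ℤ) ∨ (z.natAbs ∈ P i ∧ z.natAbs ≠ mVal M i)}
    ((Finset.range (M.card + 1)).biUnion P = Finset.range n) ∧
    (∀ i j : ℕ, i ≠ j → Disjoint (P i) (P j)) ∧
    (∀ a : ι, ∀ i ≤ M.card, ∃ t' : BTree,
      ((ts a).relabel σ).restrictTo (P i) = some t' ∧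
      (∀ u : BTree, t'.IsNode u → u.idx ∈ span i) ∧
      (∀ z ∈ span i, ∃! p : List Bool, ∃ u, t'.subtreeAt p = some u ∧ u.idx = z)) ∧
    (∀ a b : ι, ∀ i ≤ M.card, ∀ ta tb u ub,
      ((ts a).relabel σ).restrictTo (P i) = some ta →
      ((ts b).relabel σ).restrictTo (P i) = some tb →
      ta.IsNode u → tb.IsNode ub → u.idx = ub.idx → u.leafSet = ub.leafSet) := by
  intro v M P span
  have hT : ∀ a, ((ts a).relabel σ).IsPhylo n := fun a => (hts a).relabel hσ
  refine ⟨biUnion_component M v n, fun i j hij => Finset.disjoint_filter.2 fun _ _ h h' =>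
    hij (h.symm.trans h'), fun a i hi => ?_, fun a b i hi ta tb u ub hta htb hu hub h => ?_⟩
  · obtain ⟨t', ht', hnd, hspan⟩ := (hT a).exists_restrictTo_idxSpan (S := P i)
      (Finset.filter_subset _ _) (mVal_mem_component M v (mismatch_subset_Icc _ _) (hT a₀).pos hi)
      fun j hj => mVal_le_of_belongs_eq M v (Finset.mem_filter.1 hj).2
    replace hspan : span i = t'.idxSpan := hspan.symm
    exact ⟨t', ht', fun u hu => hspan ▸ hu.idx_mem_idxSpan hnd,
      fun z hz => BTree.existsUnique_subtreeAt_idx_eq hnd (hspan ▸ hz)⟩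
  · rw [← Finset.coe_inj, BTree.coe_leafSet, BTree.coe_leafSet]
    refine BTree.leaves_eq_of_idx_eq (BTree.restrictTo_nodup hta (hT a).1)
      (BTree.restrictTo_nodup htb (hT b).1) ?_ hu hub h
    rw [BTree.clusters_restrictTo hta, BTree.clusters_restrictTo htb]
    exact traces_component_eq hT a₀ hi a b

/-- Lemma 2: the sets `L_0, …, L_k` of the lower-bound
construction partition the leaf set, and for each `i` the nodes of `T|_{L_i}`
are bijectively indexed by `span(L_i)`, identically across all trees. -/
theorem stmt9 {ι : Type} [Fintype ι] [Nonempty ι] (n : ℕ)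
    (ts : ι → BTree) (hts : ∀ a, (ts a).IsPhylo n)
    (σ : Equiv.Perm ℕ) (hσ : IsOrdering σ n) (a₀ : ι) :
    let v : ℕ → ℤ := fun j => ola (ts a₀) σ j
    let M : Finset ℕ := mismatch (fun a => ola (ts a) σ) (n - 1)
    let P : ℕ → Finset ℕ := fun i => (Finset.range n).filter (fun j => belongs M v j = i)
    let span : ℕ → Set ℤ := fun i =>
      {z | z = (mVal M i : ℤ) ∨ (z.natAbs ∈ P i ∧ z.natAbs ≠ mVal M i)}
    ((Finset.range (M.card + 1)).biUnion P = Finset.range n) ∧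
    (∀ i j : ℕ, i ≠ j → Disjoint (P i) (P j)) ∧
    (∀ a : ι, ∀ i ≤ M.card, ∃ t' : BTree,
      ((ts a).relabel σ).restrictTo (P i) = some t' ∧
      (∀ u : BTree, t'.IsNode u → u.idx ∈ span i) ∧
      (∀ z ∈ span i, ∃! p : List Bool, ∃ u, t'.subtreeAt p = some u ∧ u.idx = z)) ∧
    (∀ a b : ι, ∀ i ≤ M.card, ∀ ta tb u ub,
      ((ts a).relabel σ).restrictTo (P i) = some ta →
      ((ts b).relabel σ).restrictTo (P i) = some tb →
      ta.IsNode u → tb.IsNode ub → u.idx = ub.idx → u.leafSet = ub.leafSet) :=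
  stmt9_general n ts hts σ hσ a₀

end OLA
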